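/- In a near-domain K, for all a,b and all nonzero c, we have c·d_{a,b}·c^{-1} = d_{c·a, c·b}. -/
import Mathlib


/-- A near-domain: `(K,0,+)` is a loop, `(K\{0},1,·)` is a group with `0·a=a·0=0`,
left distributivity holds, and for all `a b` there is a coefficient `d a b` with
`a+(b+x) = (a+b) + d a b * x` for all `x`. `-a` is the unique right additive inverse. -/
class NearDomain (K : Type*) extends Zero K, One K, Add K, Mul K, Neg K, Inv K where
  one_ne_zero : (1 : K) ≠ 0
  add_zero : ∀ a : K, a + 0 = a
  zero_add : ∀ a : K, 0 + a = a
  existsUnique_add_right : ∀ a b : K, ∃! x : K, a + x = b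
  existsUnique_add_left : ∀ a b : K, ∃! y : K, y + a = b
  add_neg : ∀ a : K, a + -a = 0
  mul_assoc : ∀ a b c : K, a * b * c = a * (b * c)
  one_mul : ∀ a : K, 1 * a = a
  mul_one : ∀ a : K, a * 1 = a
  mul_inv_cancel : ∀ a : K, a ≠ 0 → a * a⁻¹ = 1
  inv_mul_cancel : ∀ a : K, a ≠ 0 → a⁻¹ * a = 1
  zero_mul : ∀ a : K, 0 * a = 0
  mul_zero : ∀ a : K, a * 0 = 0
  left_distrib : ∀ a b c : K, a * (b + c) = a * b + a * c
  d : K → K → K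
  d_spec : ∀ a b x : K, a + (b + x) = (a + b) + d a b * x

/-- In a near-domain `K`, for all `a b` and all nonzero `c`,
`c * d a b * c⁻¹ = d (c·a) (c·b)`. -/
theorem NearDomain.conj_d {K : Type*} [NearDomain K] (a b c : K) (hc : c ≠ 0) :
    c * NearDomain.d a b * c⁻¹ = NearDomain.d (c * a) (c * b) := by
  have key : c * NearDomain.d a b = NearDomain.d (c * a) (c * b) * c := by
    have h1 : c * a + (c * b + c * 1) =
        (c * a + c * b) + NearDomain.d (c * a) (c * b) * (c * 1) :=
      NearDomain.d_spec (c * a) (c * b) (c * 1)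
    have h2 : c * a + (c * b + c * 1) = (c * a + c * b) + c * NearDomain.d a b := by
      rw [← NearDomain.left_distrib, ← NearDomain.left_distrib,
        NearDomain.d_spec a b 1, NearDomain.left_distrib, NearDomain.left_distrib, NearDomain.mul_one]
    obtain ⟨x, hx, hu⟩ := NearDomain.existsUnique_add_right (c * a + c * b)
      (c * a + (c * b + c * 1))
    have := (hu _ h2.symm).trans (hu _ h1.symm).symm
    rw [NearDomain.mul_one] at this
    exact this
  rw [key, NearDomain.mul_assoc, NearDomain.mul_inv_cancel c hc, NearDomain.mul_one]
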